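/- arXiv:1411.3992 — 5 statements merged into one kernel-verified Lean document; each statement's English description precedes it below -/
import Mathlib

section
/- Let a and b be real numbers with 0 < a < b, and define Ψ : ℝ → ℝ by Ψ(t) = ((t−a)(t−b)/(a−b))·(2 − (t−a)(t−b)/(ab)). Then, with c = 2(a+b)²/((b−a)ab) and d = 12ab/(b−a), the function Ψ satisfies t²·Ψ''(t) − 6t·Ψ'(t) + 12·Ψ(t) = c·t² − d for every real t. -/
/-!
The Euler-type operator `L f = t² f'' - 6 t f' + 12 f` sends `t ^ k` to `(k - 3) (k - 4) t ^ k`,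
so it annihilates the cubic and quartic parts of `Ψ`. Expanding `Ψ` in powers of `t`, its
linear coefficient cancels, and `L Ψ = 2 c₂ t² + 12 c₀` with `c₂ = (a + b)² / ((b - a) a b)` and
`c₀ = -a b / (b - a)`, which is `c t² - d`.
-/

open Polynomial

theorem Polynomial.deriv_deriv_eval {𝕜 : Type*} [NontriviallyNormedField 𝕜] (p : 𝕜[X]) :
    _root_.deriv (_root_.deriv fun t => p.eval t)
      = fun t => (derivative (derivative p)).eval t := by
  have hp : _root_.deriv (fun t => p.eval t) = fun t => (derivative p).eval t := by
    funext t; exact p.deriv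
  funext t
  rw [hp]
  exact (derivative p).deriv

theorem euler_operator_quartic (c₀ c₁ c₂ c₃ c₄ : ℝ) (f : ℝ → ℝ)
    (hf : ∀ t, f t = c₄ * t ^ 4 + c₃ * t ^ 3 + c₂ * t ^ 2 + c₁ * t + c₀) (t : ℝ) :
    t ^ 2 * deriv (deriv f) t - 6 * t * deriv f t + 12 * f t
      = 2 * c₂ * t ^ 2 + 6 * c₁ * t + 12 * c₀ := by
  have hf_eval : f = fun t =>
      (C c₄ * X ^ 4 + C c₃ * X ^ 3 + C c₂ * X ^ 2 + C c₁ * X + C c₀).eval t := by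
    funext t; simp [hf]
  rw [hf_eval, Polynomial.deriv_deriv_eval, Polynomial.deriv]
  simp only [derivative_mul, derivative_C, zero_mul, derivative_X_pow_succ,
    Nat.cast_ofNat, map_add, map_one, zero_add, Nat.cast_one, pow_one, derivative_X, mul_one,
    add_zero, derivative_one, eval_add, eval_mul, eval_C, eval_one, eval_pow, eval_X]
  ring

theorem profile_eq_quartic (a b t : ℝ) (ha : a ≠ 0) (hb : b ≠ 0) (hab : b - a ≠ 0) :
    ((t - a) * (t - b) / (a - b)) * (2 - (t - a) * (t - b) / (a * b))
      = 1 / ((b - a) * (a * b)) * t ^ 4 - 2 * (a + b) / ((b - a) * (a * b)) * t ^ 3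
        + (a + b) ^ 2 / ((b - a) * (a * b)) * t ^ 2 - a * b / (b - a) := by
  have hab' : a - b ≠ 0 := by rwa [← neg_sub, neg_ne_zero]
  field_simp
  ring

/-- For 0 < a < b, the quartic Ψ(t) = ((t−a)(t−b)/(a−b))(2 − (t−a)(t−b)/(ab))
satisfies t²Ψ'' − 6tΨ' + 12Ψ = ct² − d with c = 2(a+b)²/((b−a)ab) and
d = 12ab/(b−a). -/
theorem quartic_solves_ode (a b : ℝ) (ha : 0 < a) (hab : a < b)
    (Ψ : ℝ → ℝ)
    (hΨ : ∀ t : ℝ, Ψ t = ((t - a) * (t - b) / (a - b)) * (2 - (t - a) * (t - b) / (a * b))) :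
    ∀ t : ℝ,
      t ^ 2 * deriv (deriv Ψ) t - 6 * t * deriv Ψ t + 12 * Ψ t
        = (2 * (a + b) ^ 2 / ((b - a) * (a * b))) * t ^ 2 - 12 * a * b / (b - a) := by
  set e := (b - a) * (a * b)
  have hΨ_quartic (t : ℝ) : Ψ t = 1 / e * t ^ 4 + (-2 * (a + b) / e) * t ^ 3
      + (a + b) ^ 2 / e * t ^ 2 + 0 * t + (-(a * b) / (b - a)) := by
    rw [hΨ, profile_eq_quartic a b t ha.ne' (ha.trans hab).ne' (sub_pos.2 hab).ne']
    ring
  intro t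
  rw [euler_operator_quartic _ _ _ _ _ Ψ hΨ_quartic]
  ring
end

section
/- Let a and b be real numbers with 0 < a < b, and let P be a real polynomial of degree at most 4 satisfying P(a) = 0, P(b) = 0, P'(a) = 2, P'(b) = −2, and P'(0) = 0. Then P is uniquely determined: P(t) = ((t−a)(t−b)/(a−b))·(2 − (t−a)(t−b)/(ab)) for all real t. -/
/-- For 0 < a < b, the unique real polynomial P of degree at most 4 with
P(a) = P(b) = 0, P'(a) = 2, P'(b) = −2 and P'(0) = 0 is
P(t) = ((t−a)(t−b)/(a−b))(2 − (t−a)(t−b)/(ab)). -/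
theorem quartic_unique (a b : ℝ) (ha : 0 < a) (hab : a < b)
    (P : Polynomial ℝ) (hdeg : P.degree ≤ 4)
    (hPa : P.eval a = 0) (hPb : P.eval b = 0)
    (hP'a : (Polynomial.derivative P).eval a = 2)
    (hP'b : (Polynomial.derivative P).eval b = -2)
    (hP'0 : (Polynomial.derivative P).eval 0 = 0) :
    ∀ t : ℝ, P.eval t = ((t - a) * (t - b) / (a - b)) * (2 - (t - a) * (t - b) / (a * b)) := by
  have hb : 0 < b := ha.trans hab
  have ha0 : a ≠ 0 := ne_of_gt ha
  have hb0 : b ≠ 0 := ne_of_gt hb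
  have hba : b - a ≠ 0 := sub_ne_zero.mpr (ne_of_gt hab)
  have hab' : a - b ≠ 0 := sub_ne_zero.mpr (ne_of_lt hab)
  have hapb : a + b ≠ 0 := ne_of_gt (add_pos ha hb)
  set c0 := P.coeff 0 with hc0def
  set c1 := P.coeff 1 with hc1def
  set c2 := P.coeff 2 with hc2def
  set c3 := P.coeff 3 with hc3def
  set c4 := P.coeff 4 with hc4def
  have hnd : P.natDegree < 5 := by
    have h : P.natDegree ≤ 4 := Polynomial.natDegree_le_iff_degree_le.mpr hdeg
    omega
  have heval : ∀ x : ℝ, P.eval x = c0 + c1*x + c2*x^2 + c3*x^3 + c4*x^4 := by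
    intro x
    rw [Polynomial.eval_eq_sum_range' hnd]
    simp [Finset.sum_range_succ]
    try ring
  have hndd : (Polynomial.derivative P).natDegree < 4 := by
    have h1 := Polynomial.natDegree_derivative_le P
    omega
  have hdval : ∀ x : ℝ, (Polynomial.derivative P).eval x
      = c1 + 2*c2*x + 3*c3*x^2 + 4*c4*x^3 := by
    intro x
    rw [Polynomial.eval_eq_sum_range' hndd]
    simp [Finset.sum_range_succ, Polynomial.coeff_derivative]
    try ring
  have h1 : c0 + c1*a + c2*a^2 + c3*a^3 + c4*a^4 = 0 := by rw [← heval a]; exact hPa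
  have h2 : c0 + c1*b + c2*b^2 + c3*b^3 + c4*b^4 = 0 := by rw [← heval b]; exact hPb
  have h3 : c1 + 2*c2*a + 3*c3*a^2 + 4*c4*a^3 = 2 := by rw [← hdval a]; exact hP'a
  have h4 : c1 + 2*c2*b + 3*c3*b^2 + 4*c4*b^3 = -2 := by rw [← hdval b]; exact hP'b
  have h5 : c1 = 0 := by
    have := hdval 0
    rw [hP'0] at this
    linarith [this]
  -- solve the linear system
  have F3 : (b - a) * ((a - b)^2 * (c3 + 2*(a+b)*c4)) = 0 := by
    linear_combination (b-a)*h3 + (b-a)*h4 - 2*h2 + 2*h1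
  have hc3 : c3 = -2*(a+b)*c4 := by
    have := mul_eq_zero.mp F3
    rcases this with h | h
    · exact absurd h hba
    · rcases mul_eq_zero.mp h with h' | h'
      · exact absurd h' (pow_ne_zero 2 hab')
      · linarith
  have F2 : (b - a) * ((a + b) * (c2 - (a+b)^2*c4)) = 0 := by
    linear_combination h2 - h1 - (b-a)*h5 + (a^3 - b^3)*hc3
  have hc2 : c2 = (a+b)^2*c4 := by
    have := mul_eq_zero.mp F2
    rcases this with h | h
    · exact absurd h hba
    · rcases mul_eq_zero.mp h with h' | h'
      · exact absurd h' hapb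
      · linarith
  have hc4 : c4 = 1 / (a*b*(b-a)) := by
    have key : 2*a*b*(b-a)*c4 = 2 := by
      linear_combination h3 - h5 - 2*a*hc2 - 3*a^2*hc3
    field_simp
    linarith
  have hc0 : c0 = -(a^2*b^2)*c4 := by
    linear_combination h1 - a*h5 - a^2*hc2 - a^3*hc3
  intro t
  rw [heval t, h5, hc3, hc2, hc0, hc4]
  field_simp
  ring
end

section
/- Let n ≥ 1, let Z be a closed subset of Euclidean n-space (EuclideanSpace ℝ (Fin n)) whose Hausdorff dimension is strictly less than n − 1, and let U be a nonempty open connected subset of Euclidean n-space. Then U \ Z is path connected. -/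
/-!
If `x ∉ Z`, the points `m` for which the segment `[x, m]` meets `Z` form the image of
`Z × (0, 1]` under the smooth map `(z, t) ↦ x + t⁻¹ • (z - x)`, so they have Hausdorff
dimension at most `dimH Z + 1 < n` (subdividing `[0, 1]` into intervals as small as the pieces
of a cover of `Z` adds one to the dimension). Hence they have dense complement, and in a convex
open set `B` two points `x, y ∈ B \ Z` are joined by a broken line `[x, m] ∪ [m, y]` avoiding
`Z`. As `Zᶜ` is dense, these local connections chain together along the connected set `U`.
-/

open ENNReal

open Set Filter Topology MeasureTheory Metric Module
open scoped NNReal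

theorem ediam_prod_le {X Y : Type*} [PseudoEMetricSpace X] [PseudoEMetricSpace Y]
    (s : Set X) (t : Set Y) : ediam (s ×ˢ t) ≤ max (ediam s) (ediam t) :=
  ediam_le fun _ hp _ hq => (Prod.edist_eq _ _).trans_le <|
    max_le_max (edist_le_ediam_of_mem hp.1 hq.1) (edist_le_ediam_of_mem hp.2 hq.2)

theorem Icc_zero_one_subset_iUnion_Icc {c : ℝ} (hc : 0 < c) :
    Icc (0 : ℝ) 1 ⊆ ⋃ j : Fin (⌊c⁻¹⌋₊ + 1), Icc (j * c) ((j + 1) * c) := by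
  rintro τ ⟨hτ0, hτ1⟩
  have hj : ⌊τ / c⌋₊ < ⌊c⁻¹⌋₊ + 1 :=
    Nat.lt_succ_of_le <| Nat.floor_le_floor <| div_le_div_of_nonneg_right hτ1 hc.le |>.trans_eq
      (one_div c)
  exact mem_iUnion.2 ⟨⟨_, hj⟩, (le_div_iff₀ hc).1 (Nat.floor_le (div_nonneg hτ0 hc.le)),
    ((div_lt_iff₀ hc).1 (Nat.lt_floor_add_one _)).le⟩

theorem natFloor_inv_add_one_mul_le {c : ℝ} (hc : 0 < c) :
    ((⌊c⁻¹⌋₊ + 1 : ℕ) : ℝ) * c ≤ 1 + c := calc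
  ((⌊c⁻¹⌋₊ + 1 : ℕ) : ℝ) * c = ⌊c⁻¹⌋₊ * c + c := by push_cast; ring
  _ ≤ c⁻¹ * c + c := by gcongr; exact Nat.floor_le (inv_nonneg.2 hc.le)
  _ = 1 + c := by rw [inv_mul_cancel₀ hc.ne']

section HausdorffMeasure

variable {X : Type*} [EMetricSpace X] [MeasurableSpace X] [BorelSpace X]

theorem exists_cover_of_hausdorffMeasure_eq_zero {d : ℝ} (hd : 0 < d) {A : Set X}
    (hA : μH[d] A = 0) {r ε : ℝ≥0∞} (hr : 0 < r) (hε : 0 < ε) :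
    ∃ t : ℕ → Set X, A ⊆ ⋃ n, t n ∧ (∀ n, ediam (t n) ≤ r) ∧
      ∑' n, ediam (t n) ^ d < ε := by
  have hlt : (⨅ (t : ℕ → Set X) (_ : A ⊆ ⋃ n, t n) (_ : ∀ n, ediam (t n) ≤ r),
      ∑' n, ⨆ _ : (t n).Nonempty, ediam (t n) ^ d) < ε := by
    refine lt_of_le_of_lt ?_ (hA ▸ hε)
    rw [Measure.hausdorffMeasure_apply]
    exact le_iSup₂ (f := fun r (_ : 0 < r) => ⨅ (t : ℕ → Set X) (_ : A ⊆ ⋃ n, t n)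
      (_ : ∀ n, ediam (t n) ≤ r), ∑' n, ⨆ _ : (t n).Nonempty, ediam (t n) ^ d) r hr
  simp only [iInf_lt_iff] at hlt
  obtain ⟨t, hAt, htr, hts⟩ := hlt
  refine ⟨t, hAt, htr, lt_of_le_of_lt (ENNReal.tsum_le_tsum fun n => ?_) hts⟩
  rcases (t n).eq_empty_or_nonempty with he | hne
  · simp [he, ENNReal.zero_rpow_of_pos hd]
  · simp [hne]

theorem hausdorffMeasure_eq_zero_of_forall_cover {d : ℝ} {s : Set X}
    (h : ∀ ε : ℝ≥0∞, 0 < ε → ∃ (ι : Type) (_ : Countable ι) (t : ι → Set X),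
      s ⊆ ⋃ i, t i ∧ (∀ i, ediam (t i) ≤ ε) ∧ ∑' i, ediam (t i) ^ d ≤ ε) :
    μH[d] s = 0 := by
  choose ι hι t hst ht hsum using fun k : ℕ => h (k : ℝ≥0∞)⁻¹ (by simp)
  refine le_antisymm ?_ zero_le
  calc μH[d] s ≤ liminf (fun k => ∑' i, ediam (t k i) ^ d) atTop :=
        Measure.hausdorffMeasure_le_liminf_tsum d s _ ENNReal.tendsto_inv_nat_nhds_zero t
          (.of_forall ht) (.of_forall hst)
    _ ≤ liminf (fun k : ℕ => (k : ℝ≥0∞)⁻¹) atTop := liminf_le_liminf (.of_forall hsum)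
    _ = 0 := ENNReal.tendsto_inv_nat_nhds_zero.liminf_eq

/-- Unlike the diameters, the bounds `c n` are positive, so that `[0, 1]` can be cut into
about `1 / c n` intervals of length `c n`. -/
theorem exists_cover_ediam_le_pos_of_hausdorffMeasure_eq_zero {d : ℝ} (hd : 0 < d)
    {A : Set X} (hA : μH[d] A = 0) {r : ℝ≥0} (hr : 0 < r) {ε : ℝ≥0∞} (hε : 0 < ε) :
    ∃ (t : ℕ → Set X) (c : ℕ → ℝ≥0), A ⊆ ⋃ n, t n ∧ (∀ n, ediam (t n) ≤ c n) ∧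
      (∀ n, 0 < c n ∧ c n ≤ r) ∧ ∑' n, (c n : ℝ≥0∞) ^ d < ε := by
  obtain ⟨t, hAt, htr, hts⟩ :=
    exists_cover_of_hausdorffMeasure_eq_zero hd hA (coe_pos.2 hr) (ENNReal.half_pos hε.ne')
  obtain ⟨η, hη, hηs⟩ :=
    ENNReal.exists_pos_sum_of_countable (ENNReal.half_pos hε.ne').ne' ℕ
  have hfin (n : ℕ) : ediam (t n) ≠ ⊤ := ne_top_of_le_ne_top coe_ne_top (htr n)
  set c : ℕ → ℝ≥0 := fun n => max (ediam (t n)).toNNReal (min (η n ^ d⁻¹) r)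
  have hc (n : ℕ) : (c n : ℝ≥0∞) ^ d ≤ ediam (t n) ^ d + η n := by
    have hb : ((min (η n ^ d⁻¹) r : ℝ≥0) : ℝ≥0∞) ^ d ≤ η n := by
      rw [← coe_rpow_of_nonneg _ hd.le, coe_le_coe]
      calc min (η n ^ d⁻¹) r ^ d ≤ (η n ^ d⁻¹) ^ d := by gcongr; exact min_le_left _ _
        _ = η n := NNReal.rpow_inv_rpow hd.ne' _
    rw [coe_max, coe_toNNReal (hfin n), (ENNReal.monotone_rpow_of_nonneg hd.le).map_max]
    exact max_le le_self_add (hb.trans le_add_self)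
  refine ⟨t, c, hAt, fun n => ?_, fun n => ⟨?_, ?_⟩, ?_⟩
  · rw [coe_max, coe_toNNReal (hfin n)]
    exact le_max_left _ _
  · exact lt_max_of_lt_right (lt_min (NNReal.rpow_pos (hη n)) hr)
  · exact max_le ((toNNReal_le_toNNReal (hfin n) coe_ne_top).2 (htr n))
      (min_le_right _ _)
  · calc ∑' n, (c n : ℝ≥0∞) ^ d
        ≤ ∑' n, (ediam (t n) ^ d + η n) := ENNReal.tsum_le_tsum hc
      _ = ∑' n, ediam (t n) ^ d + ∑' n, (η n : ℝ≥0∞) := ENNReal.tsum_add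
      _ < ε / 2 + ε / 2 := ENNReal.add_lt_add hts hηs
      _ = ε := ENNReal.add_halves ε

theorem hausdorffMeasure_prod_Icc_eq_zero {d : ℝ} (hd : 0 < d) {A : Set X}
    (hA : μH[d] A = 0) :
    μH[d + 1] (A ×ˢ Icc (0 : ℝ) 1) = 0 := by
  refine hausdorffMeasure_eq_zero_of_forall_cover fun ε hε => ?_
  obtain ⟨r, hr0, hrε⟩ := ENNReal.lt_iff_exists_nnreal_btwn.1 (lt_min hε one_pos)
  have hr1 : r ≤ 1 := by exact_mod_cast (hrε.trans_le (min_le_right _ _)).le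
  obtain ⟨t, c, hAt, htc, hc, hsum⟩ :=
    exists_cover_ediam_le_pos_of_hausdorffMeasure_eq_zero hd hA (coe_pos.1 hr0)
      (ENNReal.half_pos hr0.ne')
  let N (n : ℕ) : ℕ := ⌊(c n : ℝ)⁻¹⌋₊ + 1
  let u (p : Σ n, Fin (N n)) : Set (X × ℝ) :=
    t p.1 ×ˢ Icc ((p.2 : ℝ) * c p.1) ((p.2 + 1) * c p.1)
  have hu (p : Σ n, Fin (N n)) : ediam (u p) ≤ c p.1 := by
    refine (ediam_prod_le _ _).trans (max_le (htc _) ?_)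
    rw [Real.ediam_Icc, add_one_mul, add_sub_cancel_left, ofReal_coe_nnreal]
  have hN (n : ℕ) : (N n : ℝ≥0∞) * c n ≤ 2 := by
    have hc1 : (c n : ℝ) ≤ 1 := by exact_mod_cast (hc n).2.trans hr1
    have : (N n : ℝ) * c n ≤ 2 := by
      linarith [natFloor_inv_add_one_mul_le (NNReal.coe_pos.2 (hc n).1)]
    exact_mod_cast this
  refine ⟨Σ n, Fin (N n), inferInstance, u, ?_, fun p => ?_, ?_⟩
  · rintro ⟨z, τ⟩ ⟨hz, hτ⟩
    obtain ⟨n, hn⟩ := mem_iUnion.1 (hAt hz)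
    obtain ⟨j, hj⟩ := mem_iUnion.1 (Icc_zero_one_subset_iUnion_Icc (hc n).1 hτ)
    exact mem_iUnion.2 ⟨⟨n, j⟩, hn, hj⟩
  · exact (hu p).trans ((coe_le_coe.2 (hc p.1).2).trans (hrε.le.trans (min_le_left _ _)))
  calc ∑' p, ediam (u p) ^ (d + 1) ≤ ∑' p : Σ n, Fin (N n), (c p.1 : ℝ≥0∞) ^ (d + 1) :=
        ENNReal.tsum_le_tsum fun p => rpow_le_rpow (hu p) (by positivity)
    _ = ∑' n, (N n : ℝ≥0∞) * c n * c n ^ d := by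
        rw [ENNReal.tsum_sigma']
        congr 1 with n
        rw [tsum_fintype, Finset.sum_const (b := ((c n : ℝ≥0∞) ^ (d + 1))), Finset.card_univ,
          Fintype.card_fin, nsmul_eq_mul,
          ← coe_rpow_of_nonneg _ (by positivity), NNReal.rpow_add_one (hc n).1.ne', coe_mul,
          coe_rpow_of_nonneg _ hd.le]
        ring
    _ ≤ ∑' n, 2 * (c n : ℝ≥0∞) ^ d := ENNReal.tsum_le_tsum fun n => by gcongr; exact hN n
    _ = 2 * ∑' n, (c n : ℝ≥0∞) ^ d := ENNReal.tsum_mul_left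
    _ ≤ 2 * (r / 2) := by gcongr
    _ = r := ENNReal.mul_div_cancel two_ne_zero ofNat_ne_top
    _ ≤ ε := hrε.le.trans (min_le_left _ _)

end HausdorffMeasure

theorem dimH_prod_Icc_le {X : Type*} [EMetricSpace X] (A : Set X) :
    dimH (A ×ˢ Icc (0 : ℝ) 1) ≤ dimH A + 1 := by
  borelize X
  refine ENNReal.le_of_forall_pos_le_add fun ε hε hA => ?_
  have hA' : dimH A ≠ ⊤ := ne_top_of_le_ne_top hA.ne le_self_add
  obtain ⟨d, hAd, hdε⟩ := ENNReal.lt_iff_exists_nnreal_btwn.1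
    (ENNReal.lt_add_right hA' (coe_pos.2 hε).ne')
  have hd : 0 < (d : ℝ) := by exact_mod_cast (zero_le.trans_lt hAd)
  have hprod : μH[((d + 1 : ℝ≥0) : ℝ)] (A ×ˢ Icc (0 : ℝ) 1) = 0 := by
    rw [NNReal.coe_add, NNReal.coe_one]
    exact hausdorffMeasure_prod_Icc_eq_zero hd (hausdorffMeasure_of_dimH_lt hAd)
  calc dimH (A ×ˢ Icc (0 : ℝ) 1) ≤ (d + 1 : ℝ≥0) :=
        dimH_le_of_hausdorffMeasure_ne_top (hprod ▸ zero_ne_top)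
    _ ≤ dimH A + 1 + ε := by
        rw [coe_add, coe_one, add_right_comm]
        gcongr

theorem IsConnected.isPathConnected_of_locallyJoinedIn {X : Type*} [TopologicalSpace X]
    {U S : Set X} (hU : IsConnected U) (hSU : S ⊆ U) (hUS : U ⊆ closure S)
    (hloc : ∀ x ∈ U, ∃ N ∈ 𝓝 x, ∀ a ∈ N ∩ S, ∀ b ∈ N ∩ S, JoinedIn S a b) :
    IsPathConnected S := by
  let P (x y : X) : Prop :=
    ∃ N ∈ 𝓝 x, ∃ M ∈ 𝓝 y, ∀ a ∈ N ∩ S, ∀ b ∈ M ∩ S, JoinedIn S a b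
  have hP : ∀ x ∈ U, ∀ y ∈ U, P x y := by
    intro x hx y hy
    refine hU.isPreconnected.induction₂ P (fun x hx => ?_) (fun x y z _ hy _ => ?_)
      (fun x y _ _ => ?_) hx hy
    · obtain ⟨N, hN, hJ⟩ := hloc x hx
      filter_upwards [nhdsWithin_le_nhds (interior_mem_nhds.2 hN)] with y hy
      exact ⟨interior N, interior_mem_nhds.2 hN, interior N, isOpen_interior.mem_nhds hy,
        fun a ha b hb => hJ a ⟨interior_subset ha.1, ha.2⟩ b ⟨interior_subset hb.1, hb.2⟩⟩
    · rintro ⟨N, hN, M, hM, hxy⟩ ⟨M', hM', K, hK, hyz⟩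
      obtain ⟨c, ⟨hcM, hcM'⟩, hcS⟩ := mem_closure_iff_nhds.1 (hUS hy) _ (inter_mem hM hM')
      exact ⟨N, hN, K, hK, fun a ha b hb =>
        (hxy a ha c ⟨hcM, hcS⟩).trans (hyz c ⟨hcM', hcS⟩ b hb)⟩
    · rintro ⟨N, hN, M, hM, hxy⟩
      exact ⟨M, hM, N, hN, fun a ha b hb => (hxy b hb a ha).symm⟩
  obtain ⟨x, hx⟩ := hU.nonempty
  refine isPathConnected_iff.2 ⟨closure_nonempty_iff.1 ⟨x, hUS hx⟩, fun a ha b hb => ?_⟩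
  obtain ⟨N, hN, M, hM, hab⟩ := hP a (hSU ha) b (hSU hb)
  exact hab a ⟨mem_of_mem_nhds hN, ha⟩ b ⟨mem_of_mem_nhds hM, hb⟩

section FiniteDimensional

variable {E : Type*} [NormedAddCommGroup E] [NormedSpace ℝ E] [FiniteDimensional ℝ E]

theorem dimH_setOf_segment_inter_nonempty_le {Z : Set E} {x : E} (hx : x ∉ Z) :
    dimH {m | (segment ℝ x m ∩ Z).Nonempty} ≤ dimH Z + 1 := by
  let f : E × ℝ → E := fun p => x + p.2⁻¹ • (p.1 - x)
  have hsub : {m | (segment ℝ x m ∩ Z).Nonempty} ⊆ f '' (Z ×ˢ Ioc 0 1) := by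
    rintro m ⟨z, hzseg, hzZ⟩
    rw [segment_eq_image'] at hzseg
    obtain ⟨t, ⟨ht0, ht1⟩, rfl⟩ := hzseg
    have ht : t ≠ 0 := by rintro rfl; simp_all
    exact ⟨(x + t • (m - x), t), ⟨hzZ, lt_of_le_of_ne ht0 ht.symm, ht1⟩, by
      simp [f, smul_smul, ht]⟩
  have hf : ContDiffOn ℝ 1 f (univ ×ˢ Ioi 0) := by
    intro p hp
    have : p.2 ≠ 0 := (mem_Ioi.1 hp.2).ne'
    fun_prop (disch := assumption)
  calc dimH {m | (segment ℝ x m ∩ Z).Nonempty}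
      ≤ dimH (Z ×ˢ Ioc (0 : ℝ) 1) :=
        (dimH_mono hsub).trans <| hf.dimH_image_le (convex_univ.prod (convex_Ioi 0))
          (prod_mono (subset_univ Z) Ioc_subset_Ioi_self)
    _ ≤ dimH (Z ×ˢ Icc (0 : ℝ) 1) := dimH_mono (prod_mono subset_rfl Ioc_subset_Icc_self)
    _ ≤ dimH Z + 1 := dimH_prod_Icc_le Z

theorem Convex.joinedIn_diff_of_dimH_add_one_lt {B Z : Set E} (hB : Convex ℝ B)
    (hBo : IsOpen B) (hZ : dimH Z + 1 < finrank ℝ E) {x y : E} (hx : x ∈ B \ Z)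
    (hy : y ∈ B \ Z) : JoinedIn (B \ Z) x y := by
  let shadow (p : E) : Set E := {m | (segment ℝ p m ∩ Z).Nonempty}
  have hdense : Dense (shadow x ∪ shadow y)ᶜ := by
    refine dense_compl_of_dimH_lt_finrank ?_
    rw [dimH_union]
    exact max_lt ((dimH_setOf_segment_inter_nonempty_le hx.2).trans_lt hZ)
      ((dimH_setOf_segment_inter_nonempty_le hy.2).trans_lt hZ)
  obtain ⟨m, hmB, hm⟩ := hdense.inter_open_nonempty B hBo ⟨x, hx.1⟩
  rw [mem_compl_iff, mem_union, not_or] at hm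
  have joinedIn_of_notMem_shadow {p : E} (hp : p ∈ B) (hpm : m ∉ shadow p) :
      JoinedIn (B \ Z) p m := by
    refine ((convex_segment p m).isPathConnected ⟨p, left_mem_segment ℝ p m⟩).joinedIn p
      (left_mem_segment ℝ p m) m (right_mem_segment ℝ p m) |>.mono ?_
    exact subset_sdiff.2 ⟨hB.segment_subset hp hmB, disjoint_iff_inter_eq_empty.2
      (not_nonempty_iff_eq_empty.1 hpm)⟩
  exact (joinedIn_of_notMem_shadow hx.1 hm.1).trans (joinedIn_of_notMem_shadow hy.1 hm.2).symm

end FiniteDimensional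

theorem pathConnected_of_remove_small_closed_general (n : ℕ)
    (Z : Set (EuclideanSpace ℝ (Fin n)))
    (hZd : dimH Z < (n : ℝ≥0∞) - 1)
    (U : Set (EuclideanSpace ℝ (Fin n))) (hUo : IsOpen U)
    (hUconn : IsConnected U) :
    IsPathConnected (U \ Z) := by
  have hZ : dimH Z + 1 < finrank ℝ (EuclideanSpace ℝ (Fin n)) := by
    rw [finrank_euclideanSpace_fin]
    exact lt_tsub_iff_right.1 hZd
  have hdense : Dense Zᶜ := dense_compl_of_dimH_lt_finrank (le_self_add.trans_lt hZ)
  refine hUconn.isPathConnected_of_locallyJoinedIn sdiff_subset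
    (hdense.open_subset_closure_inter hUo) fun x hx => ?_
  obtain ⟨r, hr, hball⟩ := Metric.isOpen_iff.1 hUo x hx
  refine ⟨Metric.ball x r, Metric.ball_mem_nhds x hr, fun a ha b hb => ?_⟩
  exact ((convex_ball x r).joinedIn_diff_of_dimH_add_one_lt Metric.isOpen_ball hZ
    ⟨ha.1, ha.2.2⟩ ⟨hb.1, hb.2.2⟩).mono (sdiff_subset_sdiff_left hball)

/-- A nonempty open connected subset of Euclidean n-space remains path
connected after removing a closed set of Hausdorff dimension < n − 1. -/
theorem pathConnected_of_remove_small_closed (n : ℕ) (hn : 1 ≤ n)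
    (Z : Set (EuclideanSpace ℝ (Fin n))) (hZc : IsClosed Z)
    (hZd : dimH Z < (n : ℝ≥0∞) - 1)
    (U : Set (EuclideanSpace ℝ (Fin n))) (hUo : IsOpen U)
    (hUne : U.Nonempty) (hUconn : IsConnected U) :
    IsPathConnected (U \ Z) :=
  pathConnected_of_remove_small_closed_general n Z hZd U hUo hUconn
end

section
/- Let n ≥ 1, let Z be a subset of Euclidean n-space (EuclideanSpace ℝ (Fin n)), and let p be a point. Then the image of Z \ {p} under the radial projection x ↦ (x − p)/‖x − p‖ has Hausdorff dimension at most the Hausdorff dimension of Z. -/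
/-!
Away from `p` the radial projection is locally Lipschitz: on the region `‖x - p‖ ≥ ε` it is
`2/ε`-Lipschitz. Lipschitz maps do not increase Hausdorff dimension, and in a second-countable
space this local statement suffices.
-/

open Set Topology NNReal

variable {E : Type*} [NormedAddCommGroup E] [NormedSpace ℝ E]

noncomputable def radialProjection (p x : E) : E := ‖x - p‖⁻¹ • (x - p)

theorem norm_inv_norm_smul_sub_inv_norm_smul_le {a b : E} {ε : ℝ} (hε : 0 < ε)
    (ha : ε ≤ ‖a‖) (hb : ε ≤ ‖b‖) :
    ‖‖a‖⁻¹ • a - ‖b‖⁻¹ • b‖ ≤ 2 / ε * ‖a - b‖ := by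
  have ha₀ : 0 < ‖a‖ := hε.trans_le ha
  have hb₀ : 0 < ‖b‖ := hε.trans_le hb
  have h_split : ‖a‖⁻¹ • a - ‖b‖⁻¹ • b = ‖a‖⁻¹ • (a - b) + (‖a‖⁻¹ - ‖b‖⁻¹) • b := by
    rw [smul_sub, sub_smul]; abel
  have h_first : ‖a‖⁻¹ * ‖a - b‖ ≤ ‖a - b‖ / ε := by
    rw [div_eq_inv_mul]
    exact mul_le_mul_of_nonneg_right (inv_anti₀ hε ha) (norm_nonneg _)
  have h_second : |‖a‖⁻¹ - ‖b‖⁻¹| * ‖b‖ ≤ ‖a - b‖ / ε := by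
    have h_eq : |‖a‖⁻¹ - ‖b‖⁻¹| * ‖b‖ = |‖b‖ - ‖a‖| / ‖a‖ := by
      rw [inv_sub_inv ha₀.ne' hb₀.ne', abs_div, abs_of_pos (mul_pos ha₀ hb₀)]
      field_simp
    rw [h_eq, abs_sub_comm]
    exact div_le_div₀ (norm_nonneg _) (abs_norm_sub_norm_le a b) hε ha
  calc ‖‖a‖⁻¹ • a - ‖b‖⁻¹ • b‖
      ≤ ‖‖a‖⁻¹ • (a - b)‖ + ‖(‖a‖⁻¹ - ‖b‖⁻¹) • b‖ := h_split ▸ norm_add_le _ _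
    _ = ‖a‖⁻¹ * ‖a - b‖ + |‖a‖⁻¹ - ‖b‖⁻¹| * ‖b‖ := by
        rw [norm_smul, norm_smul, Real.norm_eq_abs, Real.norm_eq_abs, abs_inv, abs_norm]
    _ ≤ ‖a - b‖ / ε + ‖a - b‖ / ε := add_le_add h_first h_second
    _ = 2 / ε * ‖a - b‖ := by ring

theorem lipschitzOnWith_radialProjection (p : E) {ε : ℝ≥0} (hε : 0 < ε) :
    LipschitzOnWith (2 / ε) (radialProjection p) {x | ε ≤ ‖x - p‖} := by
  refine lipschitzOnWith_iff_norm_sub_le.2 fun x hx y hy => ?_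
  simpa [radialProjection, sub_sub_sub_cancel_right] using
    norm_inv_norm_smul_sub_inv_norm_smul_le (NNReal.coe_pos.2 hε) hx hy

theorem dimH_image_radialProjection_le [SecondCountableTopology E] (Z : Set E) (p : E) :
    dimH (radialProjection p '' (Z \ {p})) ≤ dimH Z := by
  refine (dimH_image_le_of_locally_lipschitzOn fun x hx => ?_).trans (dimH_mono sdiff_subset)
  have hxp : 0 < ‖x - p‖ := norm_pos_iff.2 (sub_ne_zero.2 hx.2)
  have hε : 0 < ‖x - p‖₊ / 2 := half_pos (nnnorm_pos.2 (sub_ne_zero.2 hx.2))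
  have h_nhds : {y | ‖x - p‖₊ / 2 ≤ ‖y - p‖} ∈ 𝓝 x := by
    have h_cont : ContinuousAt (fun y => ‖y - p‖) x := by fun_prop
    have h_lt : ((‖x - p‖₊ / 2 : ℝ≥0) : ℝ) < ‖x - p‖ := by simpa using half_lt_self hxp
    filter_upwards [continuousAt_const.eventually_lt h_cont h_lt] with y hy
    exact hy.le
  exact ⟨_, _, mem_nhdsWithin_of_mem_nhds h_nhds, lipschitzOnWith_radialProjection p hε⟩

theorem dimH_radial_projection_le_general (n : ℕ)
    (Z : Set (EuclideanSpace ℝ (Fin n))) (p : EuclideanSpace ℝ (Fin n)) :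
    dimH ((fun x : EuclideanSpace ℝ (Fin n) => ‖x - p‖⁻¹ • (x - p)) '' (Z \ {p}))
      ≤ dimH Z :=
  dimH_image_radialProjection_le Z p

/-- The image of Z \ {p} under the radial projection x ↦ (x − p)/‖x − p‖ has
Hausdorff dimension at most that of Z. -/
theorem dimH_radial_projection_le (n : ℕ) (hn : 1 ≤ n)
    (Z : Set (EuclideanSpace ℝ (Fin n))) (p : EuclideanSpace ℝ (Fin n)) :
    dimH ((fun x : EuclideanSpace ℝ (Fin n) => ‖x - p‖⁻¹ • (x - p)) '' (Z \ {p}))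
      ≤ dimH Z :=
  dimH_radial_projection_le_general n Z p
end

section
/- Let n ≥ 1, let Z be a subset of Euclidean n-space (EuclideanSpace ℝ (Fin n)) whose Hausdorff dimension is strictly less than n − 1, and let p be a point with p ∉ Z. Then the set of unit vectors v (i.e. v with ‖v‖ = 1) such that p + t·v ∉ Z for every t > 0 is dense in the unit sphere. -/
/-!
Fix a unit direction `v`. Central projection from `p` onto the tangent hyperplane
`p + v + (ℝ ∙ v)ᗮ` is smooth on the open half-space in front of `p`, and a `C¹` image of a
set of Hausdorff dimension `< n - 1` in the `(n - 1)`-dimensional space `(ℝ ∙ v)ᗮ` has dense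
complement. So arbitrarily small `u ⊥ v` are not hit by `Z`, i.e. the ray from `p` in the
direction `v + u` misses `Z`; normalizing `v + u` gives unit directions converging to `v`.
-/
open ENNReal Set Module Metric RealInnerProductSpace

section

variable {E : Type*} [NormedAddCommGroup E] [InnerProductSpace ℝ E]

/-- For a unit vector `v` and `⟪x - p, v⟫ ≠ 0`, the line through `p` and `x` meets the hyperplane
`p + v + (ℝ ∙ v)ᗮ` at `p + v + gnomonicProjection p v x`. -/
noncomputable def gnomonicProjection (p v : E) (x : E) : (ℝ ∙ v)ᗮ :=
  (ℝ ∙ v)ᗮ.orthogonalProjectionOnto (⟪x - p, v⟫⁻¹ • (x - p))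

theorem contDiffOn_gnomonicProjection (p v : E) {k : WithTop ℕ∞} :
    ContDiffOn ℝ k (gnomonicProjection p v) {x | ⟪x - p, v⟫ ≠ 0} := by
  have hsub : ContDiff ℝ k fun x : E => x - p := contDiff_id.sub contDiff_const
  refine (ℝ ∙ v)ᗮ.orthogonalProjectionOnto.contDiff.comp_contDiffOn
    (ContDiffOn.smul (ContDiffOn.inv ?_ fun _ hx => hx) hsub.contDiffOn)
  exact (hsub.inner ℝ contDiff_const).contDiffOn

theorem inner_add_left_eq_one_of_mem_orthogonal {v u : E} (hv : ‖v‖ = 1) (hu : u ∈ (ℝ ∙ v)ᗮ) :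
    ⟪v + u, v⟫ = 1 := by
  rw [inner_add_left, real_inner_self_eq_norm_sq, hv,
    Submodule.inner_left_of_mem_orthogonal (Submodule.mem_span_singleton_self v) hu]
  norm_num

theorem gnomonicProjection_add_smul {p v u : E} (hv : ‖v‖ = 1) (hu : u ∈ (ℝ ∙ v)ᗮ) {s : ℝ}
    (hs : s ≠ 0) : gnomonicProjection p v (p + s • (v + u)) = ⟨u, hu⟩ := by
  rw [gnomonicProjection, add_sub_cancel_left, real_inner_smul_left,
    inner_add_left_eq_one_of_mem_orthogonal hv hu, mul_one, smul_smul, inv_mul_cancel₀ hs,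
    one_smul, map_add, Submodule.orthogonalProjectionOnto_mem_subspace_eq_self ⟨u, hu⟩,
    Submodule.orthogonalProjectionOnto_apply_of_mem_orthogonal
      ((ℝ ∙ v).le_orthogonal_orthogonal (Submodule.mem_span_singleton_self v)), zero_add]

theorem convex_setOf_inner_sub_pos (p v : E) : Convex ℝ {x | 0 < ⟪x - p, v⟫} := by
  simp only [inner_sub_left, sub_pos]
  exact convex_halfSpace_gt
    ⟨fun x y => inner_add_left x y v, fun c x => real_inner_smul_left x v c⟩ _

theorem finrank_orthogonal_span_singleton_eq_sub_one [FiniteDimensional ℝ E] {v : E}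
    (hv : v ≠ 0) : finrank ℝ (ℝ ∙ v)ᗮ = finrank ℝ E - 1 := by
  have h := (ℝ ∙ v).finrank_add_finrank_orthogonal
  rw [finrank_span_singleton hv] at h
  omega

theorem dense_compl_gnomonicProjection_image [FiniteDimensional ℝ E] {Z : Set E}
    (hZ : dimH Z < finrank ℝ E - 1) (p : E) {v : E} (hv : v ≠ 0) :
    Dense (gnomonicProjection p v '' (Z ∩ {x | 0 < ⟪x - p, v⟫}))ᶜ := by
  have hC1 : ContDiffOn ℝ 1 (gnomonicProjection p v) {x | 0 < ⟪x - p, v⟫} :=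
    (contDiffOn_gnomonicProjection p v).mono fun _ hx => hx.ne'
  refine hC1.dense_compl_image_of_dimH_lt_finrank (convex_setOf_inner_sub_pos p v)
    inter_subset_right ?_
  rw [finrank_orthogonal_span_singleton_eq_sub_one hv, ENNReal.natCast_sub, Nat.cast_one]
  exact (dimH_mono inter_subset_left).trans_lt hZ

theorem mk_mem_gnomonicProjection_image {p v u : E} (hv : ‖v‖ = 1) (hu : u ∈ (ℝ ∙ v)ᗮ)
    {Z : Set E} {s : ℝ} (hs : 0 < s) (hZ : p + s • (v + u) ∈ Z) :
    ⟨u, hu⟩ ∈ gnomonicProjection p v '' (Z ∩ {x | 0 < ⟪x - p, v⟫}) := by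
  refine ⟨_, ⟨hZ, ?_⟩, gnomonicProjection_add_smul hv hu hs.ne'⟩
  rwa [mem_ofPred_eq, add_sub_cancel_left, real_inner_smul_left,
    inner_add_left_eq_one_of_mem_orthogonal hv hu, mul_one]

theorem sphere_subset_closure_setOf_forall_add_smul_notMem [FiniteDimensional ℝ E] {Z : Set E}
    (hZ : dimH Z < finrank ℝ E - 1) (p : E) :
    sphere (0 : E) 1 ⊆ closure {v : E | ‖v‖ = 1 ∧ ∀ t : ℝ, 0 < t → p + t • v ∉ Z} := by
  intro v hv
  rw [mem_sphere_zero_iff_norm] at hv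
  have hv0 : v ≠ 0 := ne_zero_of_norm_ne_zero (by rw [hv]; exact one_ne_zero)
  have hvu {u : E} (hu : u ∈ (ℝ ∙ v)ᗮ) : v + u ≠ 0 := by
    intro h
    simpa [h] using inner_add_left_eq_one_of_mem_orthogonal hv hu
  set normalize : (ℝ ∙ v)ᗮ → E := fun u => ‖v + u‖⁻¹ • (v + u)
  have hcont : ContinuousAt normalize 0 := by
    refine (ContinuousAt.inv₀ (by fun_prop) ?_).smul (by fun_prop)
    simpa using hv0
  have hmaps : MapsTo normalize (gnomonicProjection p v '' (Z ∩ {x | 0 < ⟪x - p, v⟫}))ᶜ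
      {v : E | ‖v‖ = 1 ∧ ∀ t : ℝ, 0 < t → p + t • v ∉ Z} := by
    rintro ⟨u, hu⟩ hmiss
    refine ⟨norm_smul_inv_norm (hvu hu), fun t ht hZ => hmiss ?_⟩
    rw [smul_smul] at hZ
    have hs : 0 < t * ‖v + u‖⁻¹ := mul_pos ht (inv_pos.mpr (norm_pos_iff.mpr (hvu hu)))
    exact mk_mem_gnomonicProjection_image hv hu hs hZ
  have h0 := (dense_compl_gnomonicProjection_image hZ p hv0).closure_eq.symm ▸ mem_univ 0
  simpa [normalize, hv] using closure_mono (image_subset_iff.mpr hmaps) (mem_closure_image hcont h0)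

end

theorem dense_directions_missing_small_set_general (n : ℕ)
    (Z : Set (EuclideanSpace ℝ (Fin n))) (hZd : dimH Z < (n : ℝ≥0∞) - 1)
    (p : EuclideanSpace ℝ (Fin n)) :
    Metric.sphere (0 : EuclideanSpace ℝ (Fin n)) 1 ⊆
      closure {v : EuclideanSpace ℝ (Fin n) |
        ‖v‖ = 1 ∧ ∀ t : ℝ, 0 < t → p + t • v ∉ Z} :=
  sphere_subset_closure_setOf_forall_add_smul_notMem (by rwa [finrank_euclideanSpace_fin]) p

/-- If Z ⊆ ℝⁿ has Hausdorff dimension < n − 1 and p ∉ Z, then the set of unit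
directions v such that the open ray p + tv (t > 0) misses Z is dense in the
unit sphere. -/
theorem dense_directions_missing_small_set (n : ℕ) (hn : 1 ≤ n)
    (Z : Set (EuclideanSpace ℝ (Fin n))) (hZd : dimH Z < (n : ℝ≥0∞) - 1)
    (p : EuclideanSpace ℝ (Fin n)) (hp : p ∉ Z) :
    Metric.sphere (0 : EuclideanSpace ℝ (Fin n)) 1 ⊆
      closure {v : EuclideanSpace ℝ (Fin n) |
        ‖v‖ = 1 ∧ ∀ t : ℝ, 0 < t → p + t • v ∉ Z} :=
  dense_directions_missing_small_set_general n Z hZd p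
end
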